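/- For c > 1 and R ≥ 0, let α⁺(c) = (c-1)R/((c-1)² + c + (c-1)R). Then α⁺(c) ∈ [0,1), and the limiting relative loss R_GSE(c) = α⁺(c)² · (c²-c+1)/(c-1) + (1-α⁺(c))² R satisfies R_GSE(c) → R as c → 1⁺. -/

import Mathlib

open Filter Topology

noncomputable def alphaPlus (R c : ℝ) : ℝ :=
  (c - 1) * R / ((c - 1) ^ 2 + c + (c - 1) * R)

section
variable {R : ℝ}

lemma alphaPlus_denom_pos (hR : 0 ≤ R) {c : ℝ} (hc : 1 < c) :
    0 < (c - 1) ^ 2 + c + (c - 1) * R := by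
  have := mul_nonneg (sub_nonneg.2 hc.le) hR
  linarith [sq_nonneg (c - 1)]

lemma alphaPlus_mem_Ico (hR : 0 ≤ R) {c : ℝ} (hc : 1 < c) : alphaPlus R c ∈ Set.Ico 0 1 := by
  have hD := alphaPlus_denom_pos hR hc
  refine ⟨div_nonneg (mul_nonneg (sub_nonneg.2 hc.le) hR) hD.le, ?_⟩
  rw [alphaPlus, div_lt_one hD]
  linarith [sq_nonneg (c - 1)]

lemma tendsto_alphaPlus_nhds_one (R : ℝ) : Tendsto (alphaPlus R) (𝓝 1) (𝓝 0) := by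
  have hcont : ContinuousAt (alphaPlus R) 1 :=
    ContinuousAt.div (by fun_prop) (by fun_prop) (by norm_num)
  simpa [alphaPlus] using hcont.tendsto

/-- Dividing by `c - 1` cancels the factor `c - 1` of one copy of `α⁺(c)`, which is why the
first term of the loss vanishes as `c → 1⁺` although `(c² - c + 1)/(c - 1)` blows up. -/
lemma alphaPlus_sq_mul_div_sub_one {c : ℝ} (hc : c ≠ 1) (q : ℝ) :
    alphaPlus R c ^ 2 * (q / (c - 1)) =
      alphaPlus R c * (R * q / ((c - 1) ^ 2 + c + (c - 1) * R)) := by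
  rw [sq, mul_assoc, alphaPlus, div_mul_div_comm, mul_comm _ (c - 1), mul_assoc,
    mul_div_mul_left _ _ (sub_ne_zero.2 hc)]

end

/-- For `c > 1` and `R ≥ 0`, `α⁺(c) = (c-1)R/((c-1)²+c+(c-1)R) ∈ [0,1)`, and the
limiting relative loss `α⁺(c)²(c²-c+1)/(c-1) + (1-α⁺(c))²R → R` as `c → 1⁺`. -/
theorem alpha_plus_properties (R : ℝ) (hR : 0 ≤ R) :
    let α : ℝ → ℝ := fun c => (c - 1) * R / ((c - 1) ^ 2 + c + (c - 1) * R)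
    (∀ c : ℝ, 1 < c → α c ∈ Set.Ico (0 : ℝ) 1) ∧
    Tendsto (fun c => α c ^ 2 * ((c ^ 2 - c + 1) / (c - 1)) + (1 - α c) ^ 2 * R)
      (𝓝[>] 1) (𝓝 R) := by
  show (∀ c : ℝ, 1 < c → alphaPlus R c ∈ Set.Ico 0 1) ∧
    Tendsto (fun c => alphaPlus R c ^ 2 * ((c ^ 2 - c + 1) / (c - 1)) +
      (1 - alphaPlus R c) ^ 2 * R) (𝓝[>] 1) (𝓝 R)
  refine ⟨fun c hc => alphaPlus_mem_Ico hR hc, ?_⟩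
  have hα : Tendsto (alphaPlus R) (𝓝[>] 1) (𝓝 0) :=
    (tendsto_alphaPlus_nhds_one R).mono_left nhdsWithin_le_nhds
  have hfactor : Tendsto (fun c : ℝ => R * (c ^ 2 - c + 1) / ((c - 1) ^ 2 + c + (c - 1) * R))
      (𝓝[>] 1) (𝓝 R) := by
    have hcont : ContinuousAt
        (fun c : ℝ => R * (c ^ 2 - c + 1) / ((c - 1) ^ 2 + c + (c - 1) * R)) 1 :=
      ContinuousAt.div (by fun_prop) (by fun_prop) (by norm_num)
    simpa using hcont.tendsto.mono_left nhdsWithin_le_nhds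
  have htarget : Tendsto (fun c => (1 - alphaPlus R c) ^ 2 * R) (𝓝[>] 1) (𝓝 R) := by
    simpa using ((tendsto_const_nhds (x := (1 : ℝ))).sub hα).pow 2 |>.mul_const R
  have hloss := (hα.mul hfactor).add htarget
  rw [zero_mul, zero_add] at hloss
  refine hloss.congr' ?_
  filter_upwards [self_mem_nhdsWithin] with c hc
  rw [alphaPlus_sq_mul_div_sub_one (ne_of_gt hc)]
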